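/- arXiv:2110.07631 — 5 statements merged into one kernel-verified Lean document; each statement's English description precedes it below -/
import Mathlib

section
/- Let A be an I×R real matrix with I > R and compact SVD A = UΣVᵀ, and suppose Ψ is a γ-subspace embedding for A with γ ∈ (0,1). Then the Moore–Penrose pseudoinverse satisfies (ΨA)† = VΣ⁻¹(ΨU)†. -/
open Matrix BigOperators

/-- Squared Euclidean norm of a vector. -/
noncomputable def sqNorm {n : Type*} [Fintype n] (v : n → ℝ) : ℝ := ∑ i, (v i) ^ 2

/-- `Ψ` is a `γ`-subspace embedding for `A`. -/
def IsSubspaceEmbedding {J I R : ℕ} (Ψ : Matrix (Fin J) (Fin I) ℝ)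
    (A : Matrix (Fin I) (Fin R) ℝ) (γ : ℝ) : Prop :=
  ∀ x : Fin R → ℝ,
    |sqNorm ((Ψ * A).mulVec x) - sqNorm (A.mulVec x)| ≤ γ * sqNorm (A.mulVec x)

/-- `P` is the Moore–Penrose pseudoinverse of `M` (characterized by the four
Penrose conditions; it is unique when it exists). -/
def IsMoorePenroseInverse {m n : ℕ} (M : Matrix (Fin m) (Fin n) ℝ)
    (P : Matrix (Fin n) (Fin m) ℝ) : Prop :=
  M * P * M = M ∧ P * M * P = P ∧ (M * P)ᵀ = M * P ∧ (P * M)ᵀ = P * M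

/-- with `A = U Σ Vᵀ` a compact SVD and `Ψ` a `γ`-subspace embedding
for `A` (`γ ∈ (0,1)`), the Moore–Penrose pseudoinverse satisfies
`(ΨA)† = V Σ⁻¹ (ΨU)†`. -/
theorem pinv_sketch_factorization {I R r J : ℕ} (hIR : R < I)
    (γ : ℝ) (hγ : γ ∈ Set.Ioo (0 : ℝ) 1)
    (A : Matrix (Fin I) (Fin R) ℝ)
    (U : Matrix (Fin I) (Fin r) ℝ) (S : Matrix (Fin r) (Fin r) ℝ)
    (V : Matrix (Fin R) (Fin r) ℝ)
    (hr : r = A.rank)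
    (hSVD : A = U * S * Vᵀ)
    (hU : Uᵀ * U = 1) (hV : Vᵀ * V = 1)
    (hSdiag : ∀ i j, i ≠ j → S i j = 0) (hSpos : ∀ i, 0 < S i i)
    (Ψ : Matrix (Fin J) (Fin I) ℝ)
    (hΨ : IsSubspaceEmbedding Ψ A γ)
    (P : Matrix (Fin r) (Fin J) ℝ)
    (hP : IsMoorePenroseInverse (Ψ * U) P) :
    IsMoorePenroseInverse (Ψ * A) (V * S⁻¹ * P) := by

  obtain ⟨hγ0, hγ1⟩ := hγ
  -- invertibility of S
  have hSd : S = Matrix.diagonal (fun i => S i i) := by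
    ext i j; by_cases h : i = j
    · subst h; simp
    · simp [Matrix.diagonal, h, hSdiag i j h]
  have hdet : IsUnit S.det := by
    rw [hSd, Matrix.det_diagonal]
    exact (Finset.prod_pos (fun i _ => hSpos i)).ne'.isUnit
  have hS1 : S * S⁻¹ = 1 := Matrix.mul_nonsing_inv S hdet
  have hS2 : S⁻¹ * S = 1 := Matrix.nonsing_inv_mul S hdet
  -- A * (V * S⁻¹) = U
  have hAVS : A * (V * S⁻¹) = U := by
    rw [hSVD]
    calc U * S * Vᵀ * (V * S⁻¹) = U * (S * ((Vᵀ * V) * S⁻¹)) := by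
          simp only [Matrix.mul_assoc]
      _ = U := by rw [hV, Matrix.one_mul, hS1, Matrix.mul_one]
  -- kernel of Ψ * U is trivial
  have hker : ∀ y : Fin r → ℝ, (Ψ * U).mulVec y = 0 → y = 0 := by
    intro y hy
    set x := (V * S⁻¹).mulVec y with hx
    have hAx : A.mulVec x = U.mulVec y := by
      rw [hx, Matrix.mulVec_mulVec, hAVS]
    have hΨAx : (Ψ * A).mulVec x = 0 := by
      rw [hx, Matrix.mulVec_mulVec, Matrix.mul_assoc, hAVS, hy]
    have h1 := hΨ x
    rw [hΨAx] at h1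
    have hnn : 0 ≤ sqNorm (A.mulVec x) :=
      Finset.sum_nonneg fun i _ => sq_nonneg _
    have h0 : sqNorm (0 : Fin J → ℝ) = 0 := by simp [sqNorm]
    rw [h0, zero_sub, abs_neg, abs_of_nonneg hnn] at h1
    have hsq : sqNorm (A.mulVec x) = 0 := by nlinarith
    have hAx0 : A.mulVec x = 0 := by
      funext i
      have hz := (Finset.sum_eq_zero_iff_of_nonneg
        (fun i _ => sq_nonneg (A.mulVec x i))).mp hsq i (Finset.mem_univ i)
      simpa using pow_eq_zero_iff (two_ne_zero) |>.mp hz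
    have hUy : U.mulVec y = 0 := by rw [← hAx, hAx0]
    have h2 : (Uᵀ * U).mulVec y = 0 := by
      rw [← Matrix.mulVec_mulVec, hUy, Matrix.mulVec_zero]
    rwa [hU, Matrix.one_mulVec] at h2
  obtain ⟨h1, h2, h3, h4⟩ := hP
  -- P * (Ψ * U) = 1
  have hPM : P * (Ψ * U) = 1 := by
    have hcol : ∀ y : Fin r → ℝ, (P * (Ψ * U)).mulVec y = y := by
      intro y
      have hz : (Ψ * U).mulVec ((P * (Ψ * U)).mulVec y - y) = 0 := by
        rw [Matrix.mulVec_sub, Matrix.mulVec_mulVec, ← Matrix.mul_assoc, h1,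
          sub_self]
      exact sub_eq_zero.mp (hker _ hz)
    ext i j
    have := congrFun (hcol (Pi.single j 1)) i
    simpa [Matrix.one_apply, Pi.single_apply] using this
  -- key products
  have key1 : Ψ * A * (V * S⁻¹ * P) = Ψ * U * P := by
    rw [hSVD]
    have e1 : Ψ * (U * S * Vᵀ) * (V * S⁻¹ * P)
        = Ψ * (U * (S * ((Vᵀ * V) * (S⁻¹ * P)))) := by
      simp only [Matrix.mul_assoc]
    rw [e1, hV, Matrix.one_mul, ← Matrix.mul_assoc S, hS1, Matrix.one_mul,
      ← Matrix.mul_assoc]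
  have key2 : V * S⁻¹ * P * (Ψ * A) = V * Vᵀ := by
    rw [hSVD]
    have e1 : V * S⁻¹ * P * (Ψ * (U * S * Vᵀ))
        = V * (S⁻¹ * ((P * (Ψ * U)) * (S * Vᵀ))) := by
      simp only [Matrix.mul_assoc]
    rw [e1, hPM, Matrix.one_mul, ← Matrix.mul_assoc S⁻¹, hS2, Matrix.one_mul]
  refine ⟨?_, ?_, ?_, ?_⟩
  · rw [key1, hSVD]
    have e : Ψ * U * P * (Ψ * (U * S * Vᵀ))
        = Ψ * U * ((P * (Ψ * U)) * (S * Vᵀ)) := by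
      simp only [Matrix.mul_assoc]
    rw [e, hPM, Matrix.one_mul]
    simp only [Matrix.mul_assoc]
  · rw [key2]
    have e : V * Vᵀ * (V * S⁻¹ * P) = V * ((Vᵀ * V) * (S⁻¹ * P)) := by
      simp only [Matrix.mul_assoc]
    rw [e, hV, Matrix.one_mul, ← Matrix.mul_assoc]
  · rw [key1]; exact h3
  · rw [key2, Matrix.transpose_mul, Matrix.transpose_transpose]
end

section
/- Let A ∈ ℝ^{I×R} with I > R, γ ∈ (0,1), and let Ψ be a γ-subspace embedding for A. Let ΨA = U₁Σ₁V₁ᵀ be a compact SVD and define the estimated leverage scores ℓ̃ᵢ(A) := ‖eᵢᵀ A V₁ Σ₁⁻¹‖₂². Then |ℓᵢ(A) − ℓ̃ᵢ(A)| ≤ (γ/(1−γ)) ℓᵢ(A) for all i ∈ [I]. -/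
open Matrix BigOperators

lemma sqNorm_eq_dot {n : Type*} [Fintype n] (v : n → ℝ) : sqNorm v = v ⬝ᵥ v := by
  simp [sqNorm, dotProduct, sq]

lemma sqNorm_nonneg {n : Type*} [Fintype n] (v : n → ℝ) : 0 ≤ sqNorm v :=
  Finset.sum_nonneg fun i _ => sq_nonneg _

lemma sqNorm_eq_zero_iff {n : Type*} [Fintype n] (v : n → ℝ) : sqNorm v = 0 ↔ v = 0 := by
  constructor
  · intro h
    funext i
    have := (Finset.sum_eq_zero_iff_of_nonneg (fun i _ => sq_nonneg (v i))).mp h i (Finset.mem_univ i)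
    exact pow_eq_zero_iff (by norm_num) |>.mp this
  · intro h; simp [h, sqNorm]

lemma sqNorm_mulVec_orth {m n : ℕ} (U : Matrix (Fin m) (Fin n) ℝ) (hU : Uᵀ * U = 1)
    (z : Fin n → ℝ) : sqNorm (U *ᵥ z) = sqNorm z := by
  rw [sqNorm_eq_dot, sqNorm_eq_dot, Matrix.dotProduct_mulVec]
  have : (U *ᵥ z) ᵥ* U = z := by
    rw [← Matrix.mulVec_transpose, Matrix.mulVec_mulVec, hU, Matrix.one_mulVec]
  rw [this]

lemma dot_sq_le (n : ℕ) (v w : Fin n → ℝ) : (v ⬝ᵥ w)^2 ≤ sqNorm v * sqNorm w := by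
  simpa [dotProduct, sqNorm] using Finset.sum_mul_sq_le_sq_mul_sq Finset.univ v w

/-- Transpose operator-norm-style bound. -/
lemma transpose_bound {m n : ℕ} (B : Matrix (Fin m) (Fin n) ℝ) (c : ℝ) (hc : 0 ≤ c)
    (h : ∀ z, sqNorm (B *ᵥ z) ≤ c * sqNorm z) :
    ∀ z, sqNorm (Bᵀ *ᵥ z) ≤ c * sqNorm z := by
  intro z
  set w : Fin n → ℝ := Bᵀ *ᵥ z with hw
  have key : sqNorm w = z ⬝ᵥ (B *ᵥ w) := by
    calc sqNorm w = w ⬝ᵥ (Bᵀ *ᵥ z) := by rw [sqNorm_eq_dot, ← hw]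
      _ = (w ᵥ* Bᵀ) ⬝ᵥ z := Matrix.dotProduct_mulVec _ _ _
      _ = (B *ᵥ w) ⬝ᵥ z := by rw [Matrix.vecMul_transpose]
      _ = z ⬝ᵥ (B *ᵥ w) := dotProduct_comm _ _
  rcases eq_or_lt_of_le (sqNorm_nonneg w) with h0 | h0
  · rw [← h0]; exact mul_nonneg hc (sqNorm_nonneg z)
  · have h1 : (sqNorm w)^2 ≤ sqNorm z * (c * sqNorm w) := by
      calc (sqNorm w)^2 = (z ⬝ᵥ (B *ᵥ w))^2 := by rw [key]
        _ ≤ sqNorm z * sqNorm (B *ᵥ w) := dot_sq_le _ _ _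
        _ ≤ sqNorm z * (c * sqNorm w) := by
            exact mul_le_mul_of_nonneg_left (h w) (sqNorm_nonneg z)
    nlinarith [sqNorm_nonneg z]

lemma eq_of_mulVec_eq {m n : ℕ} (B C : Matrix (Fin m) (Fin n) ℝ)
    (h : ∀ x, B *ᵥ x = C *ᵥ x) : B = C := by
  ext i j
  have := congrFun (h (Pi.single j 1)) i
  simpa [Matrix.mulVec_single] using this

set_option maxHeartbeats 1000000 in
/-- let `A = U Σ Vᵀ` be a compact SVD of `A` (giving the leverage scores
`ℓᵢ(A) = ‖U(i,:)‖₂²`), let `Ψ` be a `γ`-subspace embedding for `A` with `γ ∈ (0,1)`,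
and let `ΨA = U₁ Σ₁ V₁ᵀ` be a compact SVD.  With the estimates
`ℓ̃ᵢ(A) = ‖eᵢᵀ A V₁ Σ₁⁻¹‖₂²` we have `|ℓᵢ(A) − ℓ̃ᵢ(A)| ≤ (γ/(1−γ)) ℓᵢ(A)` for all `i`. -/
theorem leverage_score_estimation {I R r r₁ J : ℕ} (hIR : R < I)
    (γ : ℝ) (hγ : γ ∈ Set.Ioo (0 : ℝ) 1)
    (A : Matrix (Fin I) (Fin R) ℝ)
    -- compact SVD of A
    (U : Matrix (Fin I) (Fin r) ℝ) (S : Matrix (Fin r) (Fin r) ℝ)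
    (V : Matrix (Fin R) (Fin r) ℝ)
    (hr : r = A.rank) (hSVD : A = U * S * Vᵀ)
    (hU : Uᵀ * U = 1) (hV : Vᵀ * V = 1)
    (hSdiag : ∀ i j, i ≠ j → S i j = 0) (hSpos : ∀ i, 0 < S i i)
    -- the sketch
    (Ψ : Matrix (Fin J) (Fin I) ℝ)
    (hΨ : IsSubspaceEmbedding Ψ A γ)
    -- compact SVD of ΨA
    (U₁ : Matrix (Fin J) (Fin r₁) ℝ) (S₁ : Matrix (Fin r₁) (Fin r₁) ℝ)
    (V₁ : Matrix (Fin R) (Fin r₁) ℝ)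
    (hr₁ : r₁ = (Ψ * A).rank) (hSVD₁ : Ψ * A = U₁ * S₁ * V₁ᵀ)
    (hU₁ : U₁ᵀ * U₁ = 1) (hV₁ : V₁ᵀ * V₁ = 1)
    (hS₁diag : ∀ i j, i ≠ j → S₁ i j = 0) (hS₁pos : ∀ i, 0 < S₁ i i)
    -- leverage scores and their estimates
    (ℓ ℓest : Fin I → ℝ)
    (hℓ : ∀ i, ℓ i = sqNorm (U i))
    (hℓest : ∀ i, ℓest i = sqNorm ((A * V₁ * S₁⁻¹) i)) :
    ∀ i, |ℓ i - ℓest i| ≤ γ / (1 - γ) * ℓ i := by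
  obtain ⟨hγ0, hγ1⟩ := hγ
  have h1γ : (0:ℝ) < 1 - γ := by linarith
  -- S is an invertible diagonal matrix; explicit inverse Sinv
  have hSd : S = diagonal (fun i => S i i) := by
    ext i j
    by_cases h : i = j
    · subst h; simp [diagonal]
    · simp [diagonal, h, hSdiag i j h]
  set Sinv : Matrix (Fin r) (Fin r) ℝ := diagonal (fun i => (S i i)⁻¹) with hSinvdef
  have hSne : ∀ i : Fin r, S i i ≠ 0 := fun i => ne_of_gt (hSpos i)
  have hSS : S * Sinv = 1 := by
    rw [hSd, hSinvdef, diagonal_mul_diagonal]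
    convert diagonal_one with i
    exact mul_inv_cancel₀ (hSne i)
  have hSS' : Sinv * S = 1 := by
    rw [hSd, hSinvdef, diagonal_mul_diagonal]
    convert diagonal_one with i
    exact inv_mul_cancel₀ (hSne i)
  -- S₁ is invertible
  have hS₁d : S₁ = diagonal (fun i => S₁ i i) := by
    ext i j
    by_cases h : i = j
    · subst h; simp [diagonal]
    · simp [diagonal, h, hS₁diag i j h]
  have hdet₁ : IsUnit S₁.det := by
    rw [hS₁d, det_diagonal]
    exact isUnit_iff_ne_zero.mpr (Finset.prod_ne_zero_iff.mpr fun i _ => ne_of_gt (hS₁pos i))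
  have hS₁S : S₁ * S₁⁻¹ = 1 := mul_nonsing_inv _ hdet₁
  have hS₁S' : S₁⁻¹ * S₁ = 1 := nonsing_inv_mul _ hdet₁
  -- kernel characterizations
  have kerA : ∀ x, A *ᵥ x = 0 ↔ Vᵀ *ᵥ x = 0 := by
    intro x
    constructor
    · intro h
      have h2 : (S * Vᵀ) *ᵥ x = 0 := by
        have : Uᵀ *ᵥ (A *ᵥ x) = 0 := by rw [h, Matrix.mulVec_zero]
        rwa [hSVD, Matrix.mulVec_mulVec, ← Matrix.mul_assoc, ← Matrix.mul_assoc, hU,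
          Matrix.one_mul] at this
      have : Sinv *ᵥ ((S * Vᵀ) *ᵥ x) = 0 := by rw [h2, Matrix.mulVec_zero]
      rwa [Matrix.mulVec_mulVec, ← Matrix.mul_assoc, hSS', Matrix.one_mul] at this
    · intro h
      rw [hSVD, ← Matrix.mulVec_mulVec, ← Matrix.mulVec_mulVec, h, Matrix.mulVec_zero,
        Matrix.mulVec_zero]
  have kerΨA : ∀ x, (Ψ * A) *ᵥ x = 0 ↔ V₁ᵀ *ᵥ x = 0 := by
    intro x
    constructor
    · intro h
      have h2 : (S₁ * V₁ᵀ) *ᵥ x = 0 := by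
        have : U₁ᵀ *ᵥ ((Ψ * A) *ᵥ x) = 0 := by rw [h, Matrix.mulVec_zero]
        rwa [hSVD₁, Matrix.mulVec_mulVec, ← Matrix.mul_assoc, ← Matrix.mul_assoc, hU₁,
          Matrix.one_mul] at this
      have : S₁⁻¹ *ᵥ ((S₁ * V₁ᵀ) *ᵥ x) = 0 := by rw [h2, Matrix.mulVec_zero]
      rwa [Matrix.mulVec_mulVec, ← Matrix.mul_assoc, hS₁S', Matrix.one_mul] at this
    · intro h
      rw [hSVD₁, ← Matrix.mulVec_mulVec, ← Matrix.mulVec_mulVec, h, Matrix.mulVec_zero,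
        Matrix.mulVec_zero]
  -- kernels of A and ΨA agree (subspace embedding with γ < 1)
  have kerEq : ∀ x, A *ᵥ x = 0 ↔ (Ψ * A) *ᵥ x = 0 := by
    intro x
    have hbd := hΨ x
    constructor
    · intro h
      have h0 : sqNorm (A *ᵥ x) = 0 := by rw [h]; exact (sqNorm_eq_zero_iff _).mpr rfl
      rw [h0] at hbd
      simp only [sub_zero, mul_zero] at hbd
      exact (sqNorm_eq_zero_iff _).mp (le_antisymm (by simpa using (abs_le.mp hbd).2)
        (sqNorm_nonneg _))
    · intro h
      have h0 : sqNorm ((Ψ * A) *ᵥ x) = 0 := by rw [h]; exact (sqNorm_eq_zero_iff _).mpr rfl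
      rw [h0] at hbd
      have h2 : sqNorm (A *ᵥ x) ≤ γ * sqNorm (A *ᵥ x) := by
        have := (abs_le.mp hbd).1
        linarith
      have h3 : sqNorm (A *ᵥ x) = 0 := by nlinarith [sqNorm_nonneg (A *ᵥ x)]
      exact (sqNorm_eq_zero_iff _).mp h3
  -- projection identities: row spaces of V and V₁ coincide
  have kerVV₁ : ∀ x, Vᵀ *ᵥ x = 0 → V₁ᵀ *ᵥ x = 0 := fun x h =>
    (kerΨA x).mp ((kerEq x).mp ((kerA x).mpr h))
  have kerV₁V : ∀ x, V₁ᵀ *ᵥ x = 0 → Vᵀ *ᵥ x = 0 := fun x h =>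
    (kerA x).mp ((kerEq x).mpr ((kerΨA x).mpr h))
  have proj1 : V₁ᵀ * (V * Vᵀ) = V₁ᵀ := by
    apply eq_of_mulVec_eq
    intro x
    have hy : Vᵀ *ᵥ (x - (V * Vᵀ) *ᵥ x) = 0 := by
      rw [Matrix.mulVec_sub, Matrix.mulVec_mulVec, ← Matrix.mul_assoc, hV, Matrix.one_mul,
        sub_self]
    have := kerVV₁ _ hy
    rw [Matrix.mulVec_sub] at this
    have h2 : V₁ᵀ *ᵥ ((V * Vᵀ) *ᵥ x) = V₁ᵀ *ᵥ x := (sub_eq_zero.mp this).symm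
    rw [Matrix.mulVec_mulVec] at h2
    exact h2
  have proj2 : Vᵀ * (V₁ * V₁ᵀ) = Vᵀ := by
    apply eq_of_mulVec_eq
    intro x
    have hy : V₁ᵀ *ᵥ (x - (V₁ * V₁ᵀ) *ᵥ x) = 0 := by
      rw [Matrix.mulVec_sub, Matrix.mulVec_mulVec, ← Matrix.mul_assoc, hV₁, Matrix.one_mul,
        sub_self]
    have := kerV₁V _ hy
    rw [Matrix.mulVec_sub] at this
    have h2 : Vᵀ *ᵥ ((V₁ * V₁ᵀ) *ᵥ x) = Vᵀ *ᵥ x := (sub_eq_zero.mp this).symm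
    rw [Matrix.mulVec_mulVec] at h2
    exact h2
  have proj1' : V * Vᵀ * V₁ = V₁ := by
    have := congrArg Matrix.transpose proj1
    simpa [Matrix.transpose_mul, Matrix.transpose_transpose, Matrix.mul_assoc] using this
  have proj2' : V₁ * V₁ᵀ * V = V := by
    have := congrArg Matrix.transpose proj2
    simpa [Matrix.transpose_mul, Matrix.transpose_transpose, Matrix.mul_assoc] using this
  -- the transfer matrices
  set N : Matrix (Fin r₁) (Fin r) ℝ := S₁ * V₁ᵀ * V * Sinv with hNdef
  set M : Matrix (Fin r) (Fin r₁) ℝ := S * Vᵀ * V₁ * S₁⁻¹ with hMdef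
  have hMN : M * N = 1 := by
    rw [hMdef, hNdef]
    calc S * Vᵀ * V₁ * S₁⁻¹ * (S₁ * V₁ᵀ * V * Sinv)
        = S * Vᵀ * V₁ * (S₁⁻¹ * S₁) * V₁ᵀ * V * Sinv := by
          simp only [Matrix.mul_assoc]
      _ = S * Vᵀ * V₁ * V₁ᵀ * V * Sinv := by rw [hS₁S', Matrix.mul_one]
      _ = S * (Vᵀ * (V₁ * V₁ᵀ)) * V * Sinv := by simp only [Matrix.mul_assoc]
      _ = S * Vᵀ * V * Sinv := by rw [proj2]
      _ = S * (Vᵀ * V) * Sinv := by simp only [Matrix.mul_assoc]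
      _ = S * Sinv := by rw [hV, Matrix.mul_one]
      _ = 1 := hSS
  have hNM : N * M = 1 := by
    rw [hMdef, hNdef]
    calc S₁ * V₁ᵀ * V * Sinv * (S * Vᵀ * V₁ * S₁⁻¹)
        = S₁ * V₁ᵀ * V * (Sinv * S) * Vᵀ * V₁ * S₁⁻¹ := by
          simp only [Matrix.mul_assoc]
      _ = S₁ * V₁ᵀ * V * Vᵀ * V₁ * S₁⁻¹ := by rw [hSS', Matrix.mul_one]
      _ = S₁ * (V₁ᵀ * (V * Vᵀ)) * V₁ * S₁⁻¹ := by simp only [Matrix.mul_assoc]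
      _ = S₁ * V₁ᵀ * V₁ * S₁⁻¹ := by rw [proj1]
      _ = S₁ * (V₁ᵀ * V₁) * S₁⁻¹ := by simp only [Matrix.mul_assoc]
      _ = S₁ * S₁⁻¹ := by rw [hV₁, Matrix.mul_one]
      _ = 1 := hS₁S
  -- the embedding condition in terms of N
  have hNbound : ∀ z : Fin r → ℝ, |sqNorm (N *ᵥ z) - sqNorm z| ≤ γ * sqNorm z := by
    intro z
    have hAxm : U * S * Vᵀ * (V * Sinv) = U := by
      calc U * S * Vᵀ * (V * Sinv)
          = U * S * (Vᵀ * V) * Sinv := by simp only [Matrix.mul_assoc]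
        _ = U * (S * Sinv) := by rw [hV, Matrix.mul_one, Matrix.mul_assoc]
        _ = U := by rw [hSS, Matrix.mul_one]
    have hAx : A *ᵥ ((V * Sinv) *ᵥ z) = U *ᵥ z := by
      rw [Matrix.mulVec_mulVec, hSVD, hAxm]
    have hΨAxm : U₁ * S₁ * V₁ᵀ * (V * Sinv) = U₁ * (S₁ * V₁ᵀ * V * Sinv) := by
      simp only [Matrix.mul_assoc]
    have hΨAx : (Ψ * A) *ᵥ ((V * Sinv) *ᵥ z) = U₁ *ᵥ (N *ᵥ z) := by
      rw [Matrix.mulVec_mulVec, Matrix.mulVec_mulVec, hSVD₁, hNdef, hΨAxm]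
    have := hΨ ((V * Sinv) *ᵥ z)
    rw [hAx, hΨAx, sqNorm_mulVec_orth U hU, sqNorm_mulVec_orth U₁ hU₁] at this
    exact this
  have hNlow : ∀ z : Fin r → ℝ, (1 - γ) * sqNorm z ≤ sqNorm (N *ᵥ z) := by
    intro z
    have := (abs_le.mp (hNbound z)).1
    linarith
  have hNup : ∀ z : Fin r → ℝ, sqNorm (N *ᵥ z) ≤ (1 + γ) * sqNorm z := by
    intro z
    have := (abs_le.mp (hNbound z)).2
    linarith
  -- bounds on M
  have hMup : ∀ w : Fin r₁ → ℝ, sqNorm (M *ᵥ w) ≤ (1 - γ)⁻¹ * sqNorm w := by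
    intro w
    have h1 : (1 - γ) * sqNorm (M *ᵥ w) ≤ sqNorm w := by
      have := hNlow (M *ᵥ w)
      rwa [Matrix.mulVec_mulVec, hNM, Matrix.one_mulVec] at this
    rw [← div_eq_inv_mul, le_div_iff₀ h1γ]
    linarith [h1]
  have hMTup : ∀ u : Fin r → ℝ, sqNorm (Mᵀ *ᵥ u) ≤ (1 - γ)⁻¹ * sqNorm u :=
    transpose_bound M _ (le_of_lt (inv_pos.mpr h1γ)) hMup
  have hNTup : ∀ w : Fin r₁ → ℝ, sqNorm (Nᵀ *ᵥ w) ≤ (1 + γ) * sqNorm w :=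
    transpose_bound N _ (by linarith) hNup
  have hMTlow : ∀ u : Fin r → ℝ, sqNorm u ≤ (1 + γ) * sqNorm (Mᵀ *ᵥ u) := by
    intro u
    have h1 : Nᵀ *ᵥ (Mᵀ *ᵥ u) = u := by
      rw [Matrix.mulVec_mulVec, ← Matrix.transpose_mul, hMN, Matrix.transpose_one,
        Matrix.one_mulVec]
    calc sqNorm u = sqNorm (Nᵀ *ᵥ (Mᵀ *ᵥ u)) := by rw [h1]
      _ ≤ (1 + γ) * sqNorm (Mᵀ *ᵥ u) := hNTup _
  -- the estimate equals ‖Mᵀ u‖² for u the i-th row of U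
  have hUM : A * V₁ * S₁⁻¹ = U * M := by
    rw [hMdef, hSVD]
    simp only [Matrix.mul_assoc]
  have hrow : ∀ i, (A * V₁ * S₁⁻¹) i = Mᵀ *ᵥ (U i) := by
    intro i
    funext j
    rw [hUM]
    simp [Matrix.mul_apply, Matrix.mulVec, dotProduct, Matrix.transpose_apply, mul_comm]
  -- conclusion
  intro i
  rw [hℓ, hℓest, hrow i]
  set L := sqNorm (U i) with hL
  set E := sqNorm (Mᵀ *ᵥ (U i)) with hE
  have hLnn : 0 ≤ L := sqNorm_nonneg _
  have hEnn : 0 ≤ E := sqNorm_nonneg _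
  have hE1 : E ≤ (1 - γ)⁻¹ * L := hMTup _
  have hE2 : L ≤ (1 + γ) * E := hMTlow _
  have hc : γ / (1 - γ) * (1 - γ) = γ := div_mul_cancel₀ _ (ne_of_gt h1γ)
  have hinv : (1 - γ)⁻¹ * (1 - γ) = 1 := inv_mul_cancel₀ (ne_of_gt h1γ)
  rw [abs_le]
  constructor
  · nlinarith [mul_le_mul_of_nonneg_left hE1 (le_of_lt h1γ)]
  · nlinarith [mul_le_mul_of_nonneg_left hE1 (le_of_lt hγ0)]
end

section
/- With the setup of the CP sampling lemma (factor matrices A^{(j)}, Khatri–Rao design matrix A^{≠n}, PSD matrix Φ, weights ℓ̃ᵢ = eᵢᵀA^{≠n}Φ(A^{≠n})ᵀeᵢ, normalization C = ∑ᵢ ℓ̃ᵢ > 0), the marginal probability of the sub-index tuple (i_j)_{j≤m, j≠n}, obtained by summing q(i) = ℓ̃ᵢ/C over all remaining sub-indices, equals (1/C)·∑_{r,k} Φ(r,k)·(∏_{j≤m, j≠n} A^{(j)}(i_j,r)A^{(j)}(i_j,k))·(∏_{j>m, j≠n} (A^{(j)ᵀ}A^{(j)})(r,k)). -/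
open Matrix BigOperators

/-- The Khatri–Rao (columnwise Kronecker) product of a family of matrices
`A j ∈ ℝ^{I j × R}`. -/
def khatriRao {M R : ℕ} {I : Fin M → ℕ}
    (A : ∀ j, Matrix (Fin (I j)) (Fin R) ℝ) :
    Matrix (∀ j, Fin (I j)) (Fin R) ℝ :=
  fun i r => ∏ j, A j (i j) r

/-- marginal probabilities of the estimated leverage score
distribution for the Khatri–Rao design matrix.  With weights
`ℓ̃ᵢ = eᵢᵀ A^{≠n} Φ (A^{≠n})ᵀ eᵢ` and `C = ∑ᵢ ℓ̃ᵢ > 0`, the probability that the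
first `m` sub-indices equal those of `ifix` (i.e. the sum of `ℓ̃ᵢ/C` over all
multi-indices agreeing with `ifix` on positions `< m`) equals
`(1/C) ∑_{r,k} Φ(r,k) (∏_{j<m} A^{(j)}(i_j,r)A^{(j)}(i_j,k)) (∏_{j≥m} (A^{(j)ᵀ}A^{(j)})(r,k))`. -/
theorem khatriRao_marginal_probability {M R : ℕ} {I : Fin M → ℕ}
    (A : ∀ j, Matrix (Fin (I j)) (Fin R) ℝ)
    (Φ : Matrix (Fin R) (Fin R) ℝ) (hΦsymm : Φ.IsSymm) (hΦpsd : Φ.PosSemidef)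
    (C : ℝ)
    (hC : C = ∑ i : ∀ j, Fin (I j), (khatriRao A * Φ * (khatriRao A)ᵀ) i i)
    (hCpos : 0 < C)
    (m : ℕ) (ifix : ∀ j, Fin (I j)) :
    ∑ i : ∀ j, Fin (I j),
        (if ∀ j : Fin M, (j : ℕ) < m → i j = ifix j then
          (khatriRao A * Φ * (khatriRao A)ᵀ) i i / C else 0) =
      (1 / C) * ∑ r, ∑ k, Φ r k *
        (∏ j : Fin M, if (j : ℕ) < m then A j (ifix j) r * A j (ifix j) k
          else ((A j)ᵀ * A j) r k) := by
  have hdiag : ∀ i : ∀ j, Fin (I j),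
      (khatriRao A * Φ * (khatriRao A)ᵀ) i i
        = ∑ r, ∑ k, Φ r k * ((∏ j, A j (i j) r) * ∏ j, A j (i j) k) := by
    intro i
    simp only [Matrix.mul_apply, Matrix.transpose_apply, khatriRao,
      Finset.sum_mul, Finset.mul_sum]
    rw [Finset.sum_comm]
    exact Finset.sum_congr rfl fun r _ => Finset.sum_congr rfl fun k _ => by ring
  have key : ∀ r k,
      (∑ i : ∀ j, Fin (I j),
        if ∀ j : Fin M, (j : ℕ) < m → i j = ifix j then
          (∏ j, A j (i j) r) * ∏ j, A j (i j) k else 0)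
        = ∏ j : Fin M, if (j : ℕ) < m then A j (ifix j) r * A j (ifix j) k
            else ((A j)ᵀ * A j) r k := by
    intro r k
    have h1 : ∀ i : ∀ j, Fin (I j),
        (if ∀ j : Fin M, (j : ℕ) < m → i j = ifix j then
          (∏ j, A j (i j) r) * ∏ j, A j (i j) k else 0)
        = ∏ j : Fin M, (if (j : ℕ) < m then
            (if i j = ifix j then A j (i j) r * A j (i j) k else 0)
            else A j (i j) r * A j (i j) k) := by
      intro i
      by_cases h : ∀ j : Fin M, (j : ℕ) < m → i j = ifix j
      · rw [if_pos h, ← Finset.prod_mul_distrib]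
        refine Finset.prod_congr rfl fun j _ => ?_
        by_cases hj : (j : ℕ) < m
        · simp [hj, h j hj]
        · simp [hj]
      · rw [if_neg h]
        push_neg at h
        obtain ⟨j0, hj0, hne⟩ := h
        symm
        apply Finset.prod_eq_zero (Finset.mem_univ j0)
        simp [hj0, hne]
    simp_rw [h1]
    rw [← Fintype.piFinset_univ,
      ← Finset.prod_univ_sum (fun j : Fin M => (Finset.univ : Finset (Fin (I j))))
        (fun j x => if (j : ℕ) < m then
          (if x = ifix j then A j x r * A j x k else 0) else A j x r * A j x k)]
    refine Finset.prod_congr rfl fun j _ => ?_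
    by_cases hj : (j : ℕ) < m
    · simp only [hj, if_true]
      rw [Finset.sum_ite_eq' Finset.univ (ifix j)]
      simp
    · simp only [hj, if_false]
      rw [Matrix.mul_apply]
      simp [Matrix.transpose_apply]
  simp_rw [hdiag]
  have step : ∀ i : ∀ j, Fin (I j),
      (if ∀ j : Fin M, (j : ℕ) < m → i j = ifix j then
        (∑ r, ∑ k, Φ r k * ((∏ j, A j (i j) r) * ∏ j, A j (i j) k)) / C else 0)
      = (1 / C) * ∑ r, ∑ k, Φ r k *
          (if ∀ j : Fin M, (j : ℕ) < m → i j = ifix j then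
            (∏ j, A j (i j) r) * ∏ j, A j (i j) k else 0) := by
    intro i
    by_cases h : ∀ j : Fin M, (j : ℕ) < m → i j = ifix j
    · simp only [if_pos h]
      rw [one_div, div_eq_mul_inv, mul_comm]
    · simp only [if_neg h, mul_zero, Finset.sum_const_zero]
  simp_rw [step]
  rw [← Finset.mul_sum]
  congr 1
  rw [Finset.sum_comm]
  refine Finset.sum_congr rfl fun r _ => ?_
  rw [Finset.sum_comm]
  refine Finset.sum_congr rfl fun k _ => ?_
  rw [← Finset.mul_sum, key r k]
end

section
/- Let A ∈ ℝ^{I×R}, let U contain the left singular vectors of A (compact SVD), and let S ∈ ℝ^{J×I} be any matrix. If σ_min(SU)² ≥ 1/√2 and ‖Uᵀ Sᵀ S Y^⊥‖_F² ≤ (ε/2)·OPT², where Y^⊥ := (I − UUᵀ)Y and OPT := min_X ‖AX − Y‖_F, then X̃ := argmin_X ‖SAX − SY‖_F satisfies ‖AX̃ − Y‖_F ≤ (1+ε)·OPT. -/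
open Matrix BigOperators

/-- Squared Frobenius norm of a matrix. -/
noncomputable def frobSq {m n : Type*} [Fintype m] [Fintype n]
    (M : Matrix m n ℝ) : ℝ := ∑ i, ∑ j, (M i j) ^ 2

set_option maxHeartbeats 1000000

lemma frobSq_nonneg {m n : Type*} [Fintype m] [Fintype n] (M : Matrix m n ℝ) :
    0 ≤ frobSq M :=
  Finset.sum_nonneg fun i _ => Finset.sum_nonneg fun j _ => sq_nonneg _

lemma frobSq_eq_trace {m n : Type*} [Fintype m] [Fintype n] (M : Matrix m n ℝ) :
    frobSq M = (Mᵀ * M).trace := by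
  rw [frobSq, Finset.sum_comm]
  simp [Matrix.trace, Matrix.diag, Matrix.mul_apply, sq]

lemma frobSq_mul_orthonormal {m r n : Type*} [Fintype m] [Fintype r] [Fintype n]
    [DecidableEq r]
    (U : Matrix m r ℝ) (hU : Uᵀ * U = 1) (W : Matrix r n ℝ) :
    frobSq (U * W) = frobSq W := by
  rw [frobSq_eq_trace, frobSq_eq_trace, Matrix.transpose_mul]
  have : Wᵀ * Uᵀ * (U * W) = Wᵀ * W := by
    rw [Matrix.mul_assoc, ← Matrix.mul_assoc Uᵀ, hU, Matrix.one_mul]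
  rw [this]

lemma frobSq_sub_orthogonal {m n : Type*} [Fintype m] [Fintype n]
    (M N : Matrix m n ℝ) (h : Mᵀ * N = 0) :
    frobSq (M - N) = frobSq M + frobSq N := by
  have h' : Nᵀ * M = 0 := by
    have := congrArg Matrix.transpose h
    simpa [Matrix.transpose_mul] using this
  rw [frobSq_eq_trace, frobSq_eq_trace, frobSq_eq_trace]
  have : (M - N)ᵀ * (M - N) = Mᵀ * M + Nᵀ * N := by
    rw [Matrix.transpose_sub, Matrix.sub_mul, Matrix.mul_sub, Matrix.mul_sub, h, h']
    abel
  rw [this, Matrix.trace_add]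

lemma frobSq_eq_sum_cols {m n : Type*} [Fintype m] [Fintype n] (M : Matrix m n ℝ) :
    frobSq M = ∑ j, sqNorm (fun i => M i j) := by
  rw [frobSq, Finset.sum_comm]; rfl

lemma vec_bound {J r : ℕ} (B : Matrix (Fin J) (Fin r) ℝ)
    (hσ : ∀ x : Fin r → ℝ, (1 / Real.sqrt 2) * sqNorm x ≤ sqNorm (B.mulVec x))
    (x : Fin r → ℝ) :
    (1 / 2) * sqNorm x ≤ sqNorm ((Bᵀ * B).mulVec x) := by
  set s := sqNorm x with hs
  set t := sqNorm ((Bᵀ * B).mulVec x) with ht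
  have hdot : x ⬝ᵥ ((Bᵀ * B).mulVec x) = sqNorm (B.mulVec x) := by
    rw [← Matrix.mulVec_mulVec, Matrix.dotProduct_mulVec, Matrix.vecMul_transpose,
      sqNorm_eq_dot]
  have hCS : (x ⬝ᵥ ((Bᵀ * B).mulVec x)) ^ 2 ≤ s * t := by
    have := Finset.sum_mul_sq_le_sq_mul_sq Finset.univ x ((Bᵀ * B).mulVec x)
    simpa [dotProduct, sqNorm, hs, ht] using this
  have hq : (1 / Real.sqrt 2) * s ≤ x ⬝ᵥ ((Bᵀ * B).mulVec x) := by
    rw [hdot]; exact hσ x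
  have hsn : 0 ≤ s := sqNorm_nonneg x
  have htn : 0 ≤ t := sqNorm_nonneg _
  rcases eq_or_lt_of_le hsn with h0 | h0
  · rw [← h0]; simpa using htn
  · have h2 : (0:ℝ) < Real.sqrt 2 := Real.sqrt_pos.mpr (by norm_num)
    have hsq : ((1 / Real.sqrt 2) * s) ^ 2 ≤ s * t :=
      le_trans (pow_le_pow_left₀ (by positivity) hq 2) hCS
    have hval : ((1 / Real.sqrt 2) * s) ^ 2 = (1/2) * s^2 := by
      rw [mul_pow, div_pow, one_pow, Real.sq_sqrt (by norm_num : (0:ℝ) ≤ 2)]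
    nlinarith [hsq, hval]

lemma colwise_bound {J r M' : ℕ} (B : Matrix (Fin J) (Fin r) ℝ)
    (hσ : ∀ x : Fin r → ℝ, (1 / Real.sqrt 2) * sqNorm x ≤ sqNorm (B.mulVec x))
    (W : Matrix (Fin r) (Fin M') ℝ) :
    (1 / 2) * frobSq W ≤ frobSq (Bᵀ * B * W) := by
  rw [frobSq_eq_sum_cols, frobSq_eq_sum_cols, Finset.mul_sum]
  apply Finset.sum_le_sum
  intro j _
  have hcol : (fun i => (Bᵀ * B * W) i j) = (Bᵀ * B).mulVec (fun i => W i j) := by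
    ext i; simp [Matrix.mul_apply, Matrix.mulVec, dotProduct]
  rw [hcol]
  exact vec_bound B hσ _

/-- structural conditions for sketched least squares.  If
`σ_min(SU)² ≥ 1/√2` and `‖UᵀSᵀSY^⊥‖_F² ≤ (ε/2)·OPT²`, then the sketched solution
`X̃ = (SA)†SY` satisfies `‖AX̃ − Y‖_F ≤ (1+ε)·OPT`. -/
theorem sketched_least_squares_structural {I R r J M' : ℕ}
    (ε : ℝ) (hε : ε ∈ Set.Ioo (0 : ℝ) 1)
    (A : Matrix (Fin I) (Fin R) ℝ) (Y : Matrix (Fin I) (Fin M') ℝ)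
    -- compact SVD of A
    (U : Matrix (Fin I) (Fin r) ℝ) (Sig : Matrix (Fin r) (Fin r) ℝ)
    (V : Matrix (Fin R) (Fin r) ℝ)
    (hr : r = A.rank) (hSVD : A = U * Sig * Vᵀ)
    (hU : Uᵀ * U = 1) (hV : Vᵀ * V = 1)
    (hSigdiag : ∀ i j, i ≠ j → Sig i j = 0) (hSigpos : ∀ i, 0 < Sig i i)
    (S : Matrix (Fin J) (Fin I) ℝ)
    -- OPT and Y^⊥
    (OPT : ℝ) (hOPT : OPT = ⨅ X : Matrix (Fin R) (Fin M') ℝ,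
      Real.sqrt (frobSq (A * X - Y)))
    (Yperp : Matrix (Fin I) (Fin M') ℝ) (hYperp : Yperp = (1 - U * Uᵀ) * Y)
    -- structural condition (i): σ_min(SU)² ≥ 1/√2
    (hσ : ∀ x : Fin r → ℝ, (1 / Real.sqrt 2) * sqNorm x ≤ sqNorm ((S * U).mulVec x))
    -- structural condition (ii)
    (hperp : frobSq (Uᵀ * Sᵀ * S * Yperp) ≤ (ε / 2) * OPT ^ 2)
    -- the sketched minimum-norm solution X̃ = (SA)† S Y
    (P : Matrix (Fin R) (Fin J) ℝ) (hP : IsMoorePenroseInverse (S * A) P)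
    (Xtilde : Matrix (Fin R) (Fin M') ℝ) (hX : Xtilde = P * (S * Y)) :
    Real.sqrt (frobSq (A * Xtilde - Y)) ≤ (1 + ε) * OPT := by
  obtain ⟨hε0, hε1⟩ := hε
  obtain ⟨h1, h2, h3, h4⟩ := hP
  -- Sigma is symmetric diagonal
  have hSd : Sig = Matrix.diagonal (fun i => Sig i i) := by
    ext i j
    by_cases h : i = j
    · subst h; simp
    · simp [Matrix.diagonal, h, hSigdiag i j h]
  have hSigT : Sigᵀ = Sig := by
    ext i j
    by_cases h : i = j
    · subst h; rfl
    · rw [Matrix.transpose_apply, hSigdiag j i (Ne.symm h), hSigdiag i j h]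
  have hTS : Matrix.diagonal (fun i => (Sig i i)⁻¹) * Sig = 1 := by
    nth_rewrite 2 [hSd]
    rw [Matrix.diagonal_mul_diagonal]
    have : (fun i => (Sig i i)⁻¹ * Sig i i) = fun _ => (1:ℝ) :=
      funext fun i => inv_mul_cancel₀ (ne_of_gt (hSigpos i))
    rw [this, Matrix.diagonal_one]
  -- Yperp facts
  have hYp : Yperp = Y - U * Uᵀ * Y := by
    rw [hYperp, Matrix.sub_mul, Matrix.one_mul]
  have hUperp : Uᵀ * Yperp = 0 := by
    rw [hYp, Matrix.mul_sub]
    simp only [← Matrix.mul_assoc]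
    rw [hU, Matrix.one_mul, sub_self]
  have horth : ∀ (W' : Matrix (Fin r) (Fin M') ℝ), (U * W')ᵀ * Yperp = 0 := by
    intro W'
    rw [Matrix.transpose_mul, Matrix.mul_assoc, hUperp, Matrix.mul_zero]
  -- residual decomposition for every X
  have hres : ∀ X : Matrix (Fin R) (Fin M') ℝ,
      A * X - Y = U * (Sig * Vᵀ * X - Uᵀ * Y) - Yperp := by
    intro X
    have e : U * (Sig * Vᵀ * X) = A * X := by
      rw [hSVD]; simp only [Matrix.mul_assoc]
    rw [Matrix.mul_sub, hYp, e, ← Matrix.mul_assoc U Uᵀ Y]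
    abel
  have hdecomp : ∀ X : Matrix (Fin R) (Fin M') ℝ,
      frobSq (A * X - Y) = frobSq (Sig * Vᵀ * X - Uᵀ * Y) + frobSq Yperp := by
    intro X
    rw [hres X, frobSq_sub_orthogonal _ _ (horth _), frobSq_mul_orthonormal U hU]
  -- OPT bounds
  have hO : Real.sqrt (frobSq Yperp) ≤ OPT := by
    rw [hOPT]
    apply le_ciInf
    intro X
    apply Real.sqrt_le_sqrt
    rw [hdecomp X]
    linarith [frobSq_nonneg (Sig * Vᵀ * X - Uᵀ * Y)]
  have hOnn : 0 ≤ OPT := le_trans (Real.sqrt_nonneg _) hO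
  have hYpO : frobSq Yperp ≤ OPT ^ 2 := by
    have h := Real.sq_sqrt (frobSq_nonneg Yperp)
    nlinarith [hO, Real.sqrt_nonneg (frobSq Yperp)]
  -- normal equations
  have hkey : (S * A)ᵀ * (S * A) * P = (S * A)ᵀ := by
    calc (S * A)ᵀ * (S * A) * P = (S * A)ᵀ * ((S * A) * P) := by
          rw [Matrix.mul_assoc]
      _ = (S * A)ᵀ * ((S * A) * P)ᵀ := by rw [h3]
      _ = ((S * A) * P * (S * A))ᵀ := by
          rw [Matrix.transpose_mul ((S * A) * P) (S * A)]
      _ = (S * A)ᵀ := by rw [h1]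
  have e1 : (S * A)ᵀ * (S * (A * Xtilde)) = (S * A)ᵀ * (S * Y) := by
    have e0 : S * (A * Xtilde) = (S * A) * Xtilde := by rw [Matrix.mul_assoc]
    rw [e0, hX]
    calc (S * A)ᵀ * ((S * A) * (P * (S * Y)))
        = (S * A)ᵀ * (S * A) * P * (S * Y) := by simp only [Matrix.mul_assoc]
      _ = (S * A)ᵀ * (S * Y) := by rw [hkey]
  have hnorm : (S * A)ᵀ * (S * (A * Xtilde) - S * Y) = 0 := by
    rw [Matrix.mul_sub, e1, sub_self]
  -- kill V and Sigma
  have hAt : (S * A)ᵀ = V * (Sig * (Uᵀ * Sᵀ)) := by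
    rw [hSVD, Matrix.transpose_mul, Matrix.transpose_mul, Matrix.transpose_mul,
      Matrix.transpose_transpose, hSigT]
    simp only [Matrix.mul_assoc]
  have hTV : Matrix.diagonal (fun i => (Sig i i)⁻¹) * Vᵀ * (S * A)ᵀ = Uᵀ * Sᵀ := by
    rw [hAt, Matrix.mul_assoc (Matrix.diagonal fun i => (Sig i i)⁻¹) Vᵀ,
      ← Matrix.mul_assoc Vᵀ V, hV, Matrix.one_mul,
      ← Matrix.mul_assoc (Matrix.diagonal fun i => (Sig i i)⁻¹) Sig, hTS, Matrix.one_mul]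
  have h5 : Uᵀ * Sᵀ * (S * (A * Xtilde) - S * Y) = 0 := by
    calc Uᵀ * Sᵀ * (S * (A * Xtilde) - S * Y)
        = Matrix.diagonal (fun i => (Sig i i)⁻¹) * Vᵀ * (S * A)ᵀ *
            (S * (A * Xtilde) - S * Y) := by rw [hTV]
      _ = Matrix.diagonal (fun i => (Sig i i)⁻¹) * Vᵀ *
            ((S * A)ᵀ * (S * (A * Xtilde) - S * Y)) := by rw [Matrix.mul_assoc]
      _ = 0 := by rw [hnorm, Matrix.mul_zero]
  -- the key matrix equation
  have ediff : S * (U * (Sig * Vᵀ * Xtilde - Uᵀ * Y)) - S * Yperp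
      = S * (A * Xtilde) - S * Y := by
    rw [← Matrix.mul_sub, ← Matrix.mul_sub, hres Xtilde]
  have hz : Uᵀ * Sᵀ * (S * (U * (Sig * Vᵀ * Xtilde - Uᵀ * Y))) = Uᵀ * Sᵀ * (S * Yperp) := by
    have h6 : Uᵀ * Sᵀ * (S * (U * (Sig * Vᵀ * Xtilde - Uᵀ * Y)) - S * Yperp) = 0 := by
      rw [ediff]; exact h5
    rw [Matrix.mul_sub] at h6
    exact sub_eq_zero.mp h6
  have hGW : (S * U)ᵀ * (S * U) * (Sig * Vᵀ * Xtilde - Uᵀ * Y)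
      = Uᵀ * Sᵀ * S * Yperp := by
    simp only [Matrix.transpose_mul, Matrix.mul_assoc]
    simp only [Matrix.mul_assoc] at hz
    exact hz
  -- Frobenius bound on W
  have hfw : (1 / 2) * frobSq (Sig * Vᵀ * Xtilde - Uᵀ * Y)
      ≤ frobSq ((S * U)ᵀ * (S * U) * (Sig * Vᵀ * Xtilde - Uᵀ * Y)) :=
    colwise_bound (S * U) hσ _
  have hWb : frobSq (Sig * Vᵀ * Xtilde - Uᵀ * Y) ≤ ε * OPT ^ 2 := by
    rw [hGW] at hfw
    linarith [hperp]
  -- conclusion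
  have hfin : frobSq (A * Xtilde - Y) ≤ ((1 + ε) * OPT) ^ 2 := by
    rw [hdecomp Xtilde]
    have hεO : 0 ≤ ε * OPT ^ 2 := mul_nonneg hε0.le (sq_nonneg OPT)
    have hε2O : 0 ≤ ε ^ 2 * OPT ^ 2 := mul_nonneg (sq_nonneg ε) (sq_nonneg OPT)
    have hexp : ((1 + ε) * OPT) ^ 2 = OPT ^ 2 + 2 * (ε * OPT ^ 2) + ε ^ 2 * OPT ^ 2 := by
      ring
    linarith [hWb, hYpO]
  calc Real.sqrt (frobSq (A * Xtilde - Y)) ≤ Real.sqrt (((1 + ε) * OPT) ^ 2) :=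
        Real.sqrt_le_sqrt hfin
    _ = (1 + ε) * OPT := Real.sqrt_sq (by positivity)
end

section
/- Let A ∈ ℝ^{I×R} with left singular vector matrix U (compact SVD), β ∈ (0,1], and let S ∼ D(J, q) be a sampling matrix where q(i) ≥ β·ℓᵢ(A)/rank(A) for all i. Let Y ∈ ℝ^{I×M}, Y^⊥ := (I − UUᵀ)Y and OPT := min_X ‖AX − Y‖_F. Then E‖Uᵀ Sᵀ S Y^⊥‖_F² ≤ (rank(A)/(Jβ))·OPT². -/
open Matrix BigOperators

lemma pi_sum_prod {J I : ℕ} (g : Fin J → Fin I → ℝ) :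
    ∑ f : Fin J → Fin I, ∏ k, g k (f k) = ∏ k, ∑ i, g k i := by
  symm
  rw [Finset.prod_univ_sum, Fintype.piFinset_univ]

lemma mean_zero_second_moment {I J : ℕ} (q : Fin I → ℝ) (hq1 : ∑ i, q i = 1)
    (φ : Fin I → ℝ) (hmean : ∑ i, q i * φ i = 0) :
    ∑ f : Fin J → Fin I, (∏ j, q (f j)) * (∑ j, φ (f j)) ^ 2
      = J * ∑ i, q i * φ i ^ 2 := by
  have key : ∀ f : Fin J → Fin I, (∏ j, q (f j)) * (∑ j, φ (f j)) ^ 2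
      = ∑ j : Fin J, ∑ j' : Fin J, ∏ k : Fin J,
          (q (f k) * (if k = j then φ (f k) else 1) * (if k = j' then φ (f k) else 1)) := by
    intro f
    rw [sq, Finset.sum_mul_sum, Finset.mul_sum]
    refine Finset.sum_congr rfl fun j _ => ?_
    rw [Finset.mul_sum]
    refine Finset.sum_congr rfl fun j' _ => ?_
    have h1 : ∏ k : Fin J, (if k = j then φ (f k) else 1) = φ (f j) := by simp
    have h2 : ∏ k : Fin J, (if k = j' then φ (f k) else 1) = φ (f j') := by simp
    rw [Finset.prod_mul_distrib, Finset.prod_mul_distrib, h1, h2]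
    ring
  simp only [key]
  rw [Finset.sum_comm]
  have inner : ∀ j j' : Fin J,
      (∑ f : Fin J → Fin I, ∏ k : Fin J,
        (q (f k) * (if k = j then φ (f k) else 1) * (if k = j' then φ (f k) else 1)))
      = if j = j' then ∑ i, q i * φ i ^ 2 else 0 := by
    intro j j'
    rw [pi_sum_prod (fun k i => (q i * if k = j then φ i else 1) * if k = j' then φ i else 1)]
    by_cases hjj : j = j'
    · subst hjj
      simp only [if_pos rfl]
      refine Finset.prod_eq_single_of_mem j (Finset.mem_univ j) ?_ |>.trans ?_
      · intro k _ hk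
        simp [hk, hq1]
      · simp [sq, mul_assoc]
    · rw [if_neg hjj]
      refine Finset.prod_eq_zero (Finset.mem_univ j) ?_
      simp only [if_pos rfl, if_neg hjj, mul_one]
      exact hmean
  refine (Finset.sum_congr rfl fun j _ => Finset.sum_comm).trans ?_
  simp only [inner]
  simp [Finset.sum_ite_eq, mul_comm]

lemma frob_pyth {I r M' : ℕ} (U : Matrix (Fin I) (Fin r) ℝ)
    (W : Matrix (Fin r) (Fin M') ℝ) (Z : Matrix (Fin I) (Fin M') ℝ)
    (h : ∀ a b, ∑ i, U i a * Z i b = 0) : frobSq Z ≤ frobSq (U * W - Z) := by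
  have cross : ∑ i, ∑ b, (U * W) i b * Z i b = 0 := by
    simp only [Matrix.mul_apply, Finset.sum_mul]
    have hb : ∀ b : Fin M', (∑ i, ∑ a, U i a * W a b * Z i b) = 0 := by
      intro b
      rw [Finset.sum_comm]
      have : ∀ a : Fin r, (∑ i, U i a * W a b * Z i b) = W a b * ∑ i, U i a * Z i b := by
        intro a
        rw [Finset.mul_sum]
        exact Finset.sum_congr rfl fun i _ => by ring
      simp only [this, h, mul_zero, Finset.sum_const_zero]
    rw [Finset.sum_comm]
    simp only [hb, Finset.sum_const_zero]
  have expand : frobSq (U * W - Z)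
      = frobSq (U * W) - 2 * (∑ i, ∑ b, (U * W) i b * Z i b) + frobSq Z := by
    unfold frobSq
    simp only [Matrix.sub_apply, sub_sq, Finset.sum_add_distrib, Finset.sum_sub_distrib,
      Finset.mul_sum]
    ring_nf
  rw [expand, cross]
  have : 0 ≤ frobSq (U * W) := Finset.sum_nonneg fun i _ => Finset.sum_nonneg fun b _ => sq_nonneg _
  linarith

lemma sum_sum_factor {r M' : ℕ} (K : ℝ) (u : Fin r → ℝ) (y : Fin M' → ℝ)
    (g : Fin r → Fin M' → ℝ) (hg : ∀ a b, g a b = K * u a * y b) :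
    ∑ a, ∑ b, g a b = K * (∑ a, u a) * (∑ b, y b) := by
  simp only [hg]
  calc ∑ a, ∑ b, K * u a * y b = ∑ a, (K * u a) * ∑ b, y b := by
        refine Finset.sum_congr rfl fun a _ => ?_
        rw [Finset.mul_sum]
    _ = (∑ a, K * u a) * ∑ b, y b := by rw [Finset.sum_mul]
    _ = K * (∑ a, u a) * (∑ b, y b) := by rw [← Finset.mul_sum]

set_option maxHeartbeats 1000000 in
/-- for a leverage score sampling matrix `S ∼ D(J,q)` with
`q(i) ≥ β·ℓᵢ(A)/rank(A)`, the expectation (over the i.i.d. sampled row indices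
`f : Fin J → Fin I` with distribution `q`) satisfies
`E‖UᵀSᵀSY^⊥‖_F² ≤ (rank(A)/(Jβ))·OPT²`. -/
theorem expected_cross_term_bound {I R r J M' : ℕ} (hJ : 0 < J)
    (A : Matrix (Fin I) (Fin R) ℝ) (Y : Matrix (Fin I) (Fin M') ℝ)
    -- compact SVD of A
    (U : Matrix (Fin I) (Fin r) ℝ) (Sig : Matrix (Fin r) (Fin r) ℝ)
    (V : Matrix (Fin R) (Fin r) ℝ)
    (hr : r = A.rank) (hSVD : A = U * Sig * Vᵀ)
    (hU : Uᵀ * U = 1) (hV : Vᵀ * V = 1)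
    (hSigdiag : ∀ i j, i ≠ j → Sig i j = 0) (hSigpos : ∀ i, 0 < Sig i i)
    -- leverage scores
    (ℓ : Fin I → ℝ) (hℓ : ∀ i, ℓ i = sqNorm (U i))
    -- the sampling distribution q, dominating the leverage score distribution
    (β : ℝ) (hβ : β ∈ Set.Ioc (0 : ℝ) 1)
    (q : Fin I → ℝ) (hq0 : ∀ i, 0 ≤ q i) (hq1 : ∑ i, q i = 1)
    (hqβ : ∀ i, β * ℓ i / (A.rank : ℝ) ≤ q i)
    -- the sampling matrix determined by the sampled indices f
    (S : (Fin J → Fin I) → Matrix (Fin J) (Fin I) ℝ)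
    (hS : ∀ (f : Fin J → Fin I) (j : Fin J) (i : Fin I),
      S f j i = (if f j = i then 1 else 0) / Real.sqrt (J * q (f j)))
    -- OPT and Y^⊥
    (OPT : ℝ) (hOPT : OPT = ⨅ X : Matrix (Fin R) (Fin M') ℝ,
      Real.sqrt (frobSq (A * X - Y)))
    (Yperp : Matrix (Fin I) (Fin M') ℝ) (hYperp : Yperp = (1 - U * Uᵀ) * Y) :
    ∑ f : Fin J → Fin I, (∏ j, q (f j)) * frobSq (Uᵀ * (S f)ᵀ * S f * Yperp) ≤
      ((A.rank : ℝ) / (J * β)) * OPT ^ 2 := by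
  obtain ⟨hβ0, hβ1⟩ := hβ
  have hJR : (0:ℝ) < (J:ℝ) := by exact_mod_cast hJ
  -- OPT is nonneg and OPT^2 dominates frobSq Yperp
  have hUYm : Uᵀ * Yperp = 0 := by
    rw [hYperp, ← Matrix.mul_assoc, Matrix.mul_sub, Matrix.mul_one, ← Matrix.mul_assoc, hU,
      Matrix.one_mul, sub_self, Matrix.zero_mul]
  have hUY : ∀ a b, ∑ i, U i a * Yperp i b = 0 := by
    intro a b
    have := congrArg (fun M => M a b) hUYm
    simpa [Matrix.mul_apply, Matrix.transpose_apply] using this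
  have hpyth : ∀ X : Matrix (Fin R) (Fin M') ℝ, frobSq Yperp ≤ frobSq (A * X - Y) := by
    intro X
    have hAXY : A * X - Y = U * (Sig * Vᵀ * X - Uᵀ * Y) - Yperp := by
      rw [hYperp, hSVD]
      rw [Matrix.mul_sub, Matrix.sub_mul, Matrix.one_mul]
      simp only [Matrix.mul_assoc]
      abel
    rw [hAXY]
    exact frob_pyth U _ Yperp hUY
  have hfrobYnn : 0 ≤ frobSq Yperp :=
    Finset.sum_nonneg fun i _ => Finset.sum_nonneg fun b _ => sq_nonneg _
  have hOPTnn : 0 ≤ OPT := by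
    rw [hOPT]
    exact Real.iInf_nonneg fun X => Real.sqrt_nonneg _
  have hYOPT : frobSq Yperp ≤ OPT ^ 2 := by
    have h1 : Real.sqrt (frobSq Yperp) ≤ OPT := by
      rw [hOPT]
      exact le_ciInf fun X => Real.sqrt_le_sqrt (hpyth X)
    calc frobSq Yperp = Real.sqrt (frobSq Yperp) ^ 2 := (Real.sq_sqrt hfrobYnn).symm
      _ ≤ OPT ^ 2 := by
          exact pow_le_pow_left₀ (Real.sqrt_nonneg _) h1 2
  -- trivial case r = 0
  rcases Nat.eq_zero_or_pos r with hr0 | hrpos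
  · subst hr0
    have hrank0 : (A.rank : ℝ) = 0 := by exact_mod_cast hr.symm
    simp [frobSq, hrank0]
  have hrank : 0 < A.rank := hr ▸ hrpos
  have hrankR : (0:ℝ) < (A.rank : ℝ) := by exact_mod_cast hrank
  have hℓnn : ∀ i, 0 ≤ ℓ i := by
    intro i
    rw [hℓ]
    exact Finset.sum_nonneg fun a _ => sq_nonneg _
  have hU0 : ∀ i, q i = 0 → ∀ a, U i a = 0 := by
    intro i hqi a
    have h1 : β * ℓ i / (A.rank : ℝ) ≤ 0 := hqi ▸ hqβ i
    have h2 : ℓ i ≤ 0 := by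
      by_contra hc
      push_neg at hc
      have : 0 < β * ℓ i / (A.rank : ℝ) := by positivity
      linarith
    have h3 : ℓ i = 0 := le_antisymm h2 (hℓnn i)
    have h4 : ∑ a, (U i a) ^ 2 = 0 := by rw [← sqNorm, ← hℓ]; exact h3
    have := (Finset.sum_eq_zero_iff_of_nonneg (fun a _ => sq_nonneg (U i a))).mp h4 a
      (Finset.mem_univ a)
    exact (pow_eq_zero_iff two_ne_zero).mp this
  -- the per-(a,b) sampled coordinate function
  have hmean : ∀ (a : Fin r) (b : Fin M'),
      ∑ i, q i * ((↑J * q i)⁻¹ * (U i a * Yperp i b)) = 0 := by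
    intro a b
    have : ∀ i, q i * ((↑J * q i)⁻¹ * (U i a * Yperp i b))
        = (J:ℝ)⁻¹ * (U i a * Yperp i b) := by
      intro i
      by_cases hqi : q i = 0
      · simp [hqi, hU0 i hqi a]
      · field_simp
    simp only [this, ← Finset.mul_sum, hUY a b, mul_zero]
  have hfrob : ∀ f : Fin J → Fin I, frobSq (Uᵀ * (S f)ᵀ * S f * Yperp)
      = ∑ a, ∑ b, (∑ j, (↑J * q (f j))⁻¹ * (U (f j) a * Yperp (f j) b)) ^ 2 := by
    intro f
    have hM : ∀ a b, (Uᵀ * (S f)ᵀ * S f * Yperp) a b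
        = ∑ j, (↑J * q (f j))⁻¹ * (U (f j) a * Yperp (f j) b) := by
      intro a b
      have h1 : Uᵀ * (S f)ᵀ * S f * Yperp = (S f * U)ᵀ * (S f * Yperp) := by
        rw [Matrix.transpose_mul, Matrix.mul_assoc]
      rw [h1, Matrix.mul_apply]
      refine Finset.sum_congr rfl fun j _ => ?_
      have hU' : (S f * U) j a = U (f j) a / Real.sqrt (↑J * q (f j)) := by
        rw [Matrix.mul_apply]
        rw [Finset.sum_eq_single (f j)]
        · rw [hS]; simp; ring
        · intro i _ hi
          simp [hS, Ne.symm hi]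
        · simp
      have hY' : (S f * Yperp) j b = Yperp (f j) b / Real.sqrt (↑J * q (f j)) := by
        rw [Matrix.mul_apply]
        rw [Finset.sum_eq_single (f j)]
        · rw [hS]; simp; ring
        · intro i _ hi
          simp [hS, Ne.symm hi]
        · simp
      rw [Matrix.transpose_apply, hU', hY', div_mul_div_comm,
        Real.mul_self_sqrt (mul_nonneg (Nat.cast_nonneg J) (hq0 _)), div_eq_mul_inv, mul_comm]
    simp only [frobSq, hM]
  calc ∑ f : Fin J → Fin I, (∏ j, q (f j)) * frobSq (Uᵀ * (S f)ᵀ * S f * Yperp)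
      = ∑ a : Fin r, ∑ b : Fin M', ∑ f : Fin J → Fin I,
          (∏ j, q (f j)) * (∑ j, (↑J * q (f j))⁻¹ * (U (f j) a * Yperp (f j) b)) ^ 2 := by
        simp only [hfrob, Finset.mul_sum]
        refine Finset.sum_comm.trans ?_
        exact Finset.sum_congr rfl fun a _ => Finset.sum_comm
    _ = ∑ a : Fin r, ∑ b : Fin M',
          (J:ℝ) * ∑ i, q i * ((↑J * q i)⁻¹ * (U i a * Yperp i b)) ^ 2 := by
        refine Finset.sum_congr rfl fun a _ => Finset.sum_congr rfl fun b _ => ?_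
        exact mean_zero_second_moment q hq1 (fun i => (↑J * q i)⁻¹ * (U i a * Yperp i b)) (hmean a b)
    _ = (J:ℝ) * ∑ i, (q i * ((↑J * q i)⁻¹) ^ 2 * ℓ i) * (∑ b, (Yperp i b) ^ 2) := by
        have step : (∑ a : Fin r, ∑ b : Fin M',
              (J:ℝ) * ∑ i, q i * ((↑J * q i)⁻¹ * (U i a * Yperp i b)) ^ 2)
            = ∑ i, ∑ a : Fin r, ∑ b : Fin M',
              (J:ℝ) * (q i * ((↑J * q i)⁻¹ * (U i a * Yperp i b)) ^ 2) := by
          simp only [Finset.mul_sum]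
          exact (Finset.sum_congr rfl fun a _ => Finset.sum_comm).trans Finset.sum_comm
        rw [step, Finset.mul_sum]
        refine Finset.sum_congr rfl fun i _ => ?_
        rw [sum_sum_factor ((J:ℝ) * q i * ((↑J * q i)⁻¹) ^ 2) (fun a => (U i a) ^ 2)
          (fun b => (Yperp i b) ^ 2) _ (fun a b => by ring), hℓ]
        unfold sqNorm
        ring
    _ ≤ (J:ℝ) * ∑ i, ((A.rank : ℝ) / ((J:ℝ)^2 * β)) * (∑ b, (Yperp i b) ^ 2) := by
        refine mul_le_mul_of_nonneg_left (Finset.sum_le_sum fun i _ => ?_) (le_of_lt hJR)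
        refine mul_le_mul_of_nonneg_right ?_
          (Finset.sum_nonneg fun b _ => sq_nonneg _)
        by_cases hqi : q i = 0
        · rw [hqi]
          have : (0:ℝ) ≤ (A.rank : ℝ) / ((J:ℝ)^2 * β) := by positivity
          simpa using this
        · have hqip : 0 < q i := lt_of_le_of_ne (hq0 i) (Ne.symm hqi)
          have hb : β * ℓ i ≤ q i * (A.rank : ℝ) := by
            have := hqβ i
            rw [div_le_iff₀ hrankR] at this
            exact this
          have hJne : (J:ℝ) ≠ 0 := ne_of_gt hJR
          have key : q i * ((↑J * q i)⁻¹) ^ 2 * ℓ i = ℓ i / ((J:ℝ)^2 * q i) := by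
            field_simp
          rw [key, div_le_div_iff₀ (by positivity) (by positivity)]
          nlinarith [mul_le_mul_of_nonneg_right hb (sq_nonneg (J:ℝ))]
    _ = ((A.rank : ℝ) / (J * β)) * frobSq Yperp := by
        rw [← Finset.mul_sum, ← mul_assoc]
        unfold frobSq
        congr 1
        field_simp
    _ ≤ ((A.rank : ℝ) / (J * β)) * OPT ^ 2 := by
        refine mul_le_mul_of_nonneg_left hYOPT ?_
        positivity
end
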